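/- Let a > 0, μ ∈ ℂ, v ∈ ℝ with |μ| ≤ a/2, and let ψ*, ψ ∈ ℂ. If |v|·(|ψ*| + |ψ|)² is sufficiently small (e.g. |v|(|ψ*|+|ψ|)² ≤ a/100), then the system of equations (a-μ)φ* + v φ*² φ = a ψ*, (a-μ)φ + v φ* φ² = a ψ has a solution (φ*, φ) ∈ ℂ² with |φ* - (a/(a-μ))ψ*| ≤ C|v|(|ψ*|+|ψ|)³/a and |φ - (a/(a-μ))ψ| ≤ C|v|(|ψ*|+|ψ|)³/a for an absolute constant C. -/

import Mathlib

/-! The ansatz `φ* = a ψ* / z`, `φ = a ψ / z` turns both equations into the single scalar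
equation `z = (a - μ) + c / z²` with `c = v a² ψ* ψ`. Since `|a - μ| ≥ a / 2` and the smallness
assumption gives `16 |c| ≤ |a - μ|³`, the map `z ↦ (a - μ) + c / z²` is a `1/2`-contraction of
the closed ball of radius `|a - μ| / 4` about `a - μ`. Its fixed point satisfies
`|z - (a - μ)| = |c| / |z|² = O(|v| (|ψ*| + |ψ|)²)`, which yields the error bound. -/

open Metric Set

lemma norm_sub_radius_le_of_mem_closedBall {E : Type*} [SeminormedAddCommGroup E] {a b : E} {r : ℝ}
    (h : b ∈ closedBall a r) : ‖a‖ - r ≤ ‖b‖ := by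
  have := norm_sub_norm_le a b
  rw [norm_sub_rev] at this
  linarith [mem_closedBall_iff_norm.mp h]

section FixedPoint

variable {α c : ℂ}

lemma norm_bounds_of_mem_closedBall_quarter {z : ℂ} (hz : z ∈ closedBall α (‖α‖ / 4)) :
    3 * ‖α‖ / 4 ≤ ‖z‖ ∧ ‖z‖ ≤ 5 * ‖α‖ / 4 := by
  constructor <;> linarith [norm_sub_radius_le_of_mem_closedBall hz, norm_le_of_mem_closedBall hz]

lemma mapsTo_add_div_sq_closedBall (hc : 16 * ‖c‖ ≤ ‖α‖ ^ 3) :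
    MapsTo (fun z ↦ α + c / z ^ 2) (closedBall α (‖α‖ / 4)) (closedBall α (‖α‖ / 4)) := by
  intro z hz
  have hz' := (norm_bounds_of_mem_closedBall_quarter hz).1
  have hz2 : 9 * ‖α‖ ^ 2 / 16 ≤ ‖z‖ ^ 2 := by nlinarith [norm_nonneg α]
  rw [mem_closedBall_iff_norm, add_sub_cancel_left, norm_div, norm_pow]
  exact div_le_of_le_mul₀ (by positivity) (by positivity) (by nlinarith [norm_nonneg α])

lemma lipschitzOnWith_add_div_sq_closedBall (hα : α ≠ 0) (hc : 16 * ‖c‖ ≤ ‖α‖ ^ 3) :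
    LipschitzOnWith (1 / 2) (fun z ↦ α + c / z ^ 2) (closedBall α (‖α‖ / 4)) := by
  refine LipschitzOnWith.of_dist_le_mul fun x hx y hy ↦ ?_
  obtain ⟨hx₁, hx₂⟩ := norm_bounds_of_mem_closedBall_quarter hx
  obtain ⟨hy₁, hy₂⟩ := norm_bounds_of_mem_closedBall_quarter hy
  have hR : 0 < ‖α‖ := norm_pos_iff.mpr hα
  have hx0 : x ≠ 0 := norm_pos_iff.mp (by linarith)
  have hy0 : y ≠ 0 := norm_pos_iff.mp (by linarith)
  have hdiff : α + c / x ^ 2 - (α + c / y ^ 2) = c * (y + x) * (y - x) / (x ^ 2 * y ^ 2) := by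
    field_simp
    ring
  have hsum : ‖y + x‖ ≤ 5 * ‖α‖ / 2 := by linarith [norm_add_le y x]
  have hprod : (3 * ‖α‖ / 4) ^ 4 ≤ ‖x‖ ^ 2 * ‖y‖ ^ 2 := by
    calc (3 * ‖α‖ / 4) ^ 4 = (3 * ‖α‖ / 4) ^ 2 * (3 * ‖α‖ / 4) ^ 2 := by ring
      _ ≤ ‖x‖ ^ 2 * ‖y‖ ^ 2 := by gcongr
  have hfactor : ‖c‖ * ‖y + x‖ ≤ 1 / 2 * (‖x‖ ^ 2 * ‖y‖ ^ 2) := by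
    calc ‖c‖ * ‖y + x‖ ≤ ‖α‖ ^ 3 / 16 * (5 * ‖α‖ / 2) := by gcongr; linarith
      _ ≤ 1 / 2 * (3 * ‖α‖ / 4) ^ 4 := by nlinarith [pow_pos hR 4]
      _ ≤ 1 / 2 * (‖x‖ ^ 2 * ‖y‖ ^ 2) := by gcongr
  simp only [dist_eq_norm, hdiff, norm_div, norm_mul, norm_pow, norm_sub_rev y x]
  rw [div_le_iff₀ (by positivity), NNReal.coe_div, NNReal.coe_one, NNReal.coe_ofNat]
  nlinarith [norm_nonneg (x - y)]

lemma exists_eq_add_div_sq (hα : α ≠ 0) (hc : 16 * ‖c‖ ≤ ‖α‖ ^ 3) :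
    ∃ z ∈ closedBall α (‖α‖ / 4), z = α + c / z ^ 2 := by
  have hmaps := mapsTo_add_div_sq_closedBall hc
  have hcontr : ContractingWith (1 / 2) (hmaps.restrict _ _ _) :=
    ⟨by norm_num,
      (lipschitzOnWith_add_div_sq_closedBall hα hc).mapsToRestrict hmaps⟩
  obtain ⟨z, hz, hfix, -⟩ := hcontr.exists_fixedPoint' isClosed_closedBall.isComplete hmaps
    (mem_closedBall_self (by positivity)) (edist_ne_top _ _)
  exact ⟨z, hz, hfix.symm⟩

end FixedPoint

section Field

variable {K : Type*} [Field K]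

lemma background_eqns_of_eq_add_div_sq {α v b ψs ψ z : K} (hz : z ≠ 0)
    (h : z = α + v * b ^ 2 * ψs * ψ / z ^ 2) :
    α * (b * ψs / z) + v * (b * ψs / z) ^ 2 * (b * ψ / z) = b * ψs ∧
      α * (b * ψ / z) + v * (b * ψs / z) * (b * ψ / z) ^ 2 = b * ψ := by
  constructor
  · calc _ = b * ψs / z * (α + v * b ^ 2 * ψs * ψ / z ^ 2) := by field_simp
      _ = b * ψs := by rw [← h]; field_simp
  · calc _ = b * ψ / z * (α + v * b ^ 2 * ψs * ψ / z ^ 2) := by field_simp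
      _ = b * ψ := by rw [← h]; field_simp

lemma mul_div_sub_div_mul_of_eq_add_div_sq {α c z : K} (hα : α ≠ 0) (hz : z ≠ 0)
    (h : z = α + c / z ^ 2) (b w : K) :
    b * w / z - b / α * w = -(b * w * c / (z ^ 3 * α)) := by
  have hsub : α - z = -(c / z ^ 2) := by linear_combination -h
  calc b * w / z - b / α * w = b * w * (α - z) / (z * α) := by field_simp
    _ = -(b * w * c / (z ^ 3 * α)) := by rw [hsub]; field_simp

end Field

/-- Constant-field background field equations (Remark 1.1): for `a > 0`,
`|μ| ≤ a/2`, and `|v|(|ψ*|+|ψ|)² ≤ a/100`, the system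
`(a-μ)φ* + v φ*²φ = a ψ*`, `(a-μ)φ + v φ*φ² = a ψ` has a solution close to
`((a/(a-μ))ψ*, (a/(a-μ))ψ)`, up to an error `C|v|(|ψ*|+|ψ|)³/a` for an
absolute constant `C`. -/
theorem stmt1 :
    ∃ C : ℝ, 0 < C ∧
      ∀ (a : ℝ) (μ : ℂ) (v : ℝ) (ψs ψ : ℂ), 0 < a → ‖μ‖ ≤ a / 2 →
        |v| * (‖ψs‖ + ‖ψ‖) ^ 2 ≤ a / 100 →
        ∃ φs φ : ℂ,
          ((a : ℂ) - μ) * φs + (v : ℂ) * φs ^ 2 * φ = (a : ℂ) * ψs ∧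
          ((a : ℂ) - μ) * φ + (v : ℂ) * φs * φ ^ 2 = (a : ℂ) * ψ ∧
          ‖φs - ((a : ℂ) / ((a : ℂ) - μ)) * ψs‖ ≤
            C * |v| * (‖ψs‖ + ‖ψ‖) ^ 3 / a ∧
          ‖φ - ((a : ℂ) / ((a : ℂ) - μ)) * ψ‖ ≤
            C * |v| * (‖ψs‖ + ‖ψ‖) ^ 3 / a := by
  refine ⟨10, by norm_num, fun a μ v ψs ψ ha hμ hv ↦ ?_⟩
  set s := ‖ψs‖ + ‖ψ‖
  set α : ℂ := a - μ
  set c : ℂ := v * a ^ 2 * ψs * ψ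
  have hna : ‖(a : ℂ)‖ = a := by rw [Complex.norm_real, Real.norm_of_nonneg ha.le]
  have hα : a / 2 ≤ ‖α‖ := by linarith [norm_sub_norm_le (a : ℂ) μ]
  have hα0 : α ≠ 0 := norm_pos_iff.mp (by linarith)
  have hc : ‖c‖ ≤ |v| * a ^ 2 * s ^ 2 / 4 := by
    have : ‖ψs‖ * ‖ψ‖ ≤ s ^ 2 / 4 := by nlinarith [sq_nonneg (‖ψs‖ - ‖ψ‖)]
    simp only [c, norm_mul, norm_pow, hna, Complex.norm_real, Real.norm_eq_abs]
    nlinarith [mul_le_mul_of_nonneg_left this (by positivity : 0 ≤ |v| * a ^ 2)]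
  have hcα : 16 * ‖c‖ ≤ ‖α‖ ^ 3 := by
    have : (a / 2) ^ 3 ≤ ‖α‖ ^ 3 := by gcongr
    nlinarith [mul_le_mul_of_nonneg_left hv (by positivity : 0 ≤ a ^ 2)]
  obtain ⟨z, hzball, hz⟩ := exists_eq_add_div_sq hα0 hcα
  have hzα : 3 * a / 8 ≤ ‖z‖ := by linarith [(norm_bounds_of_mem_closedBall_quarter hzball).1]
  have hz0 : z ≠ 0 := norm_pos_iff.mp (by linarith)
  obtain ⟨hφs, hφ⟩ := background_eqns_of_eq_add_div_sq hz0 hz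
  have herr : ∀ w : ℂ, ‖w‖ ≤ s → ‖a * w / z - a / α * w‖ ≤ 10 * |v| * s ^ 3 / a := by
    intro w hw
    calc ‖a * w / z - a / α * w‖ = a * ‖w‖ * ‖c‖ / (‖z‖ ^ 3 * ‖α‖) := by
          rw [mul_div_sub_div_mul_of_eq_add_div_sq hα0 hz0 hz, norm_neg, norm_div]
          simp only [norm_mul, norm_pow, hna]
      _ ≤ a * s * (|v| * a ^ 2 * s ^ 2 / 4) / ((3 * a / 8) ^ 3 * (a / 2)) := by gcongr
      _ = 256 / 27 * |v| * s ^ 3 / a := by field_simp; ring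
      _ ≤ 10 * |v| * s ^ 3 / a := by gcongr; norm_num
  exact ⟨_, _, hφs, hφ, herr ψs (by simp [s]), herr ψ (by simp [s])⟩
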